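/- arXiv:1203.1807 — 2 statements merged into one kernel-verified Lean document; each statement's English description precedes it below -/
import Mathlib

section
/- Let v := c Θ^0_0 + Σ a^l_k F^l_k + Σ b^m_n Θ^m_n be any finite linear combination with real coefficients c, a^l_k (over pairs of integers −1 ≤ l ≤ k) and b^m_n (over pairs of integers 0 ≤ m ≤ n), and define the polynomial f := Σ a^l_k x^{l+1}(y²+z²)^{k−l+1} (sum over the same index set as the a^l_k). Then v(f) = 0, i.e. f is a first integral of v. -/
noncomputable section
open MvPolynomial

/-- Polynomial functions of the variables x, y, z (indexed `0, 1, 2`). -/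
abbrev Poly3 := MvPolynomial (Fin 3) ℝ

/-- Polynomial vector fields on ℝ³, given by their three components. -/
abbrev VF3 := Fin 3 → Poly3

/-- The derivation action `v(g) = v₁ ∂g/∂x + v₂ ∂g/∂y + v₃ ∂g/∂z`. -/
def applyVF (v : VF3) (g : Poly3) : Poly3 := ∑ i, v i * pderiv i g

/-- The Lie bracket `[v,w] := v∘w − w∘v`, with i-th component `v(wᵢ) − w(vᵢ)`. -/
def bracket (v w : VF3) : VF3 := fun i => applyVF v (w i) - applyVF w (v i)

/-- The divergence `div v = ∂v₁/∂x + ∂v₂/∂y + ∂v₃/∂z`. -/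
def divergence (v : VF3) : Poly3 := ∑ i, pderiv i (v i)

/-- The vector field `F^l_k := x^l (y²+z²)^{k−l} ((k−l+1) x ∂_x − ((l+1)/2) y ∂_y − ((l+1)/2) z ∂_z)`
for integers `−1 ≤ l ≤ k`; for `l = −1` the second and third components vanish and this is
`(k+2)(y²+z²)^{k+1} ∂_x`. -/
def Fvf (l k : ℤ) : VF3 :=
  ![C ((k - l + 1 : ℤ) : ℝ) * X 0 ^ (l + 1).toNat * (X 1 ^ 2 + X 2 ^ 2) ^ (k - l).toNat,
    C (-((l + 1 : ℤ) : ℝ) / 2) * X 0 ^ l.toNat * X 1 * (X 1 ^ 2 + X 2 ^ 2) ^ (k - l).toNat,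
    C (-((l + 1 : ℤ) : ℝ) / 2) * X 0 ^ l.toNat * X 2 * (X 1 ^ 2 + X 2 ^ 2) ^ (k - l).toNat]

/-- The vector field `Θ^m_n := x^m (y²+z²)^{n−m} (z ∂_y − y ∂_z)` for integers `0 ≤ m ≤ n`. -/
def Tvf (m n : ℤ) : VF3 :=
  ![0,
    X 0 ^ m.toNat * (X 1 ^ 2 + X 2 ^ 2) ^ (n - m).toNat * X 2,
    -(X 0 ^ m.toNat * (X 1 ^ 2 + X 2 ^ 2) ^ (n - m).toNat * X 1)]

/-- doubled, nat-parametrised F field -/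
def GvfN (α β : ℕ) : VF3 :=
  ![C (2 * ((β : ℝ) + 1)) * X 0 ^ α * (X 1 ^ 2 + X 2 ^ 2) ^ β,
    C (-(α : ℝ)) * X 0 ^ (α - 1) * X 1 * (X 1 ^ 2 + X 2 ^ 2) ^ β,
    C (-(α : ℝ)) * X 0 ^ (α - 1) * X 2 * (X 1 ^ 2 + X 2 ^ 2) ^ β]

lemma pd_ne01 : pderiv (0 : Fin 3) (X 1 : Poly3) = 0 := pderiv_X_of_ne (by decide)
lemma pd_ne02 : pderiv (0 : Fin 3) (X 2 : Poly3) = 0 := pderiv_X_of_ne (by decide)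
lemma pd_ne10 : pderiv (1 : Fin 3) (X 0 : Poly3) = 0 := pderiv_X_of_ne (by decide)
lemma pd_ne12 : pderiv (1 : Fin 3) (X 2 : Poly3) = 0 := pderiv_X_of_ne (by decide)
lemma pd_ne20 : pderiv (2 : Fin 3) (X 0 : Poly3) = 0 := pderiv_X_of_ne (by decide)
lemma pd_ne21 : pderiv (2 : Fin 3) (X 1 : Poly3) = 0 := pderiv_X_of_ne (by decide)

lemma keyG (α β α' β' : ℕ) :
    applyVF (GvfN α β) (X 0 ^ α' * (X 1 ^ 2 + X 2 ^ 2) ^ (β' + 1)) +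
    applyVF (GvfN α' β') (X 0 ^ α * (X 1 ^ 2 + X 2 ^ 2) ^ (β + 1)) = 0 := by
  simp only [applyVF, GvfN, Fin.sum_univ_three, Matrix.cons_val_zero, Matrix.cons_val_one,
    Matrix.head_cons, Matrix.cons_val_two, Matrix.tail_cons, pderiv_mul, pderiv_pow,
    pderiv_X_self, pd_ne01, pd_ne02, pd_ne10, pd_ne12, pd_ne20, pd_ne21,
    Nat.add_sub_cancel, map_add, map_mul, map_natCast, map_one, map_ofNat, map_neg]
  push_cast
  ring

lemma keyT (m n : ℤ) (α β : ℕ) :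
    applyVF (Tvf m n) (X 0 ^ α * (X 1 ^ 2 + X 2 ^ 2) ^ (β + 1)) = 0 := by
  simp only [applyVF, Tvf, Fin.sum_univ_three, Matrix.cons_val_zero, Matrix.cons_val_one,
    Matrix.head_cons, Matrix.cons_val_two, Matrix.tail_cons, pderiv_mul, pderiv_pow,
    pderiv_X_self, pd_ne01, pd_ne02, pd_ne10, pd_ne12, pd_ne20, pd_ne21,
    Nat.add_sub_cancel, map_add, zero_mul]
  push_cast
  ring

lemma Fvf_eq (l k : ℤ) (h1 : -1 ≤ l) (h2 : l ≤ k) (i : Fin 3) :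
    Fvf l k i = (1 / 2 : ℝ) • GvfN (l + 1).toNat (k - l).toNat i := by
  have e1 : (((l + 1).toNat : ℝ)) = ((l + 1 : ℤ) : ℝ) := by
    rw [← Int.cast_natCast]; congr 1; omega
  have e2 : (((k - l).toNat : ℝ)) = ((k - l : ℤ) : ℝ) := by
    rw [← Int.cast_natCast]; congr 1; omega
  have e3 : l.toNat = (l + 1).toNat - 1 := by omega
  fin_cases i <;>
    · simp only [Fvf, GvfN, e3, smul_eq_C_mul, ← C_mul]
      simp only [Fin.reduceFinMk, Fin.isValue, Fin.mk_zero, Fin.mk_one,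
        Matrix.cons_val_zero, Matrix.cons_val_one, Matrix.head_cons,
        Matrix.cons_val_two, Matrix.tail_cons]
      simp only [← mul_assoc, ← C_mul]
      congr 2
      first
        | (rw [e2]; push_cast; ring)
        | (rw [e1]; push_cast; ring)

lemma applyVF_add (v w : VF3) (g : Poly3) :
    applyVF (fun i => v i + w i) g = applyVF v g + applyVF w g := by
  simp [applyVF, add_mul, Finset.sum_add_distrib]

lemma applyVF_smul (r : ℝ) (v : VF3) (g : Poly3) :
    applyVF (fun i => r • v i) g = r • applyVF v g := by
  simp [applyVF, Finset.smul_sum, smul_mul_assoc]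

lemma applyVF_sum {ι : Type*} (s : Finset ι) (F : ι → VF3) (g : Poly3) :
    applyVF (fun i => ∑ p ∈ s, F p i) g = ∑ p ∈ s, applyVF (F p) g := by
  simp only [applyVF, Finset.sum_mul]
  exact Finset.sum_comm

lemma applyVF_g_sum {ι : Type*} (v : VF3) (s : Finset ι) (h : ι → Poly3) :
    applyVF v (∑ p ∈ s, h p) = ∑ p ∈ s, applyVF v (h p) := by
  simp only [applyVF, map_sum, Finset.mul_sum]
  exact Finset.sum_comm

lemma applyVF_g_smul (v : VF3) (r : ℝ) (g : Poly3) :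
    applyVF v (r • g) = r • applyVF v g := by
  simp [applyVF, Finset.smul_sum, mul_smul_comm]

lemma smul_cancel_two {M : Type*} [AddCommGroup M] [Module ℝ M] {x : M} (h : x + x = 0) : x = 0 := by
  have h2 : (2 : ℝ) • x = 0 := by rw [two_smul]; exact h
  have := congrArg (fun y => (2 : ℝ)⁻¹ • y) h2
  simpa [smul_smul] using this

lemma sum_antisymm {ι : Type*} (s : Finset ι) (w : ι → ℝ) (A : ι → ι → Poly3)
    (h : ∀ p q, A p q + A q p = 0) :
    ∑ p ∈ s, ∑ q ∈ s, (w p * (1 / 2) * w q) • A p q = 0 := by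
  refine smul_cancel_two ?_
  have hD : (∑ p ∈ s, ∑ q ∈ s, (w p * (1 / 2) * w q) • A p q)
      = - ∑ p ∈ s, ∑ q ∈ s, (w p * (1 / 2) * w q) • A p q := by
    calc ∑ p ∈ s, ∑ q ∈ s, (w p * (1 / 2) * w q) • A p q
        = ∑ p ∈ s, ∑ q ∈ s, -((w q * (1 / 2) * w p) • A q p) := by
          refine Finset.sum_congr rfl fun p _ => Finset.sum_congr rfl fun q _ => ?_
          rw [eq_neg_of_add_eq_zero_left (h q p), smul_neg, neg_neg,
            show w p * (1 / 2) * w q = w q * (1 / 2) * w p by ring]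
      _ = - ∑ q ∈ s, ∑ p ∈ s, (w p * (1 / 2) * w q) • A p q := by
          rw [Finset.sum_comm]; simp only [Finset.sum_neg_distrib]
          exact neg_inj.mpr Finset.sum_comm.symm
      _ = - ∑ p ∈ s, ∑ q ∈ s, (w p * (1 / 2) * w q) • A p q := by rw [Finset.sum_comm]
  nth_rewrite 2 [hD]
  exact add_neg_cancel _

/-- for any finite linear combination
`v = c Θ^0_0 + Σ a^l_k F^l_k + Σ b^m_n Θ^m_n` (over `−1 ≤ l ≤ k` and `0 ≤ m ≤ n`),
the polynomial `f = Σ a^l_k x^{l+1}(y²+z²)^{k−l+1}` is a first integral of `v`. -/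
theorem firstIntegral_of_combination (c : ℝ) (SF ST : Finset (ℤ × ℤ)) (a b : ℤ × ℤ → ℝ)
    (hSF : ∀ p ∈ SF, -1 ≤ p.1 ∧ p.1 ≤ p.2) (hST : ∀ p ∈ ST, 0 ≤ p.1 ∧ p.1 ≤ p.2) :
    applyVF
      (fun i => c • Tvf 0 0 i + ∑ p ∈ SF, a p • Fvf p.1 p.2 i + ∑ p ∈ ST, b p • Tvf p.1 p.2 i)
      (∑ p ∈ SF, a p •
        (X 0 ^ (p.1 + 1).toNat * (X 1 ^ 2 + X 2 ^ 2) ^ (p.2 - p.1 + 1).toNat)) = 0 := by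
  -- rewrite the exponent of the first integral
  have hfe : (∑ p ∈ SF, a p •
        (X 0 ^ (p.1 + 1).toNat * (X 1 ^ 2 + X 2 ^ 2) ^ (p.2 - p.1 + 1).toNat) : Poly3)
      = ∑ p ∈ SF, a p •
        (X 0 ^ (p.1 + 1).toNat * (X 1 ^ 2 + X 2 ^ 2) ^ ((p.2 - p.1).toNat + 1)) := by
    refine Finset.sum_congr rfl fun p hp => ?_
    have := hSF p hp
    rw [show (p.2 - p.1 + 1).toNat = (p.2 - p.1).toNat + 1 by omega]
  rw [hfe]
  set f : Poly3 := ∑ p ∈ SF, a p •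
        (X 0 ^ (p.1 + 1).toNat * (X 1 ^ 2 + X 2 ^ 2) ^ ((p.2 - p.1).toNat + 1)) with hf
  -- every Θ field annihilates f
  have hT : ∀ u v : ℤ, applyVF (Tvf u v) f = 0 := by
    intro u v
    rw [hf, applyVF_g_sum]
    exact Finset.sum_eq_zero fun p _ => by rw [applyVF_g_smul, keyT, smul_zero]
  rw [applyVF_add, applyVF_add]
  have h1 : applyVF (fun i => c • Tvf 0 0 i) f = 0 := by
    rw [applyVF_smul, hT, smul_zero]
  have h3 : applyVF (fun i => ∑ p ∈ ST, b p • Tvf p.1 p.2 i) f = 0 := by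
    rw [applyVF_sum]
    exact Finset.sum_eq_zero fun p _ => by rw [applyVF_smul, hT, smul_zero]
  have h2 : applyVF (fun i => ∑ p ∈ SF, a p • Fvf p.1 p.2 i) f = 0 := by
    rw [applyVF_sum]
    have step : ∀ p ∈ SF, applyVF (fun i => a p • Fvf p.1 p.2 i) f
        = ∑ q ∈ SF, (a p * (1 / 2) * a q) •
            applyVF (GvfN (p.1 + 1).toNat (p.2 - p.1).toNat)
              (X 0 ^ (q.1 + 1).toNat * (X 1 ^ 2 + X 2 ^ 2) ^ ((q.2 - q.1).toNat + 1)) := by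
      intro p hp
      obtain ⟨hp1, hp2⟩ := hSF p hp
      have hFv : (fun i => a p • Fvf p.1 p.2 i)
          = fun i => (a p * (1 / 2)) • GvfN (p.1 + 1).toNat (p.2 - p.1).toNat i := by
        funext i
        rw [Fvf_eq p.1 p.2 hp1 hp2, smul_smul]
      rw [hFv, applyVF_smul, hf, applyVF_g_sum, Finset.smul_sum]
      exact Finset.sum_congr rfl fun q _ => by rw [applyVF_g_smul, smul_smul]
    rw [Finset.sum_congr rfl step]
    exact sum_antisymm SF a _ fun p q => keyG _ _ _ _
  rw [h1, h2, h3, add_zero, add_zero]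
end
end

section
/- Fix an integer p ≥ 1, a real number α_p, and set X_p := (1/2) F^{−1}_0 + α_p F^p_p. Then for all integers 0 ≤ m < n there exist real numbers c_0, …, c_{n−m−1} and a real constant c, with c equal to α_p^{n−m} times a rational number depending only on m, n and p, such that with Y := Σ_{i=0}^{n−m−1} c_i Θ^{m+ip+i+1}_{n+ip} one has Θ^m_n + [Y, X_p] = c · Θ^{p(n−m)+n}_{p(n−m)+n}. In other words, modulo the image of the homological operator ad(X_p), every off-diagonal term Θ^m_n (m < n) can be replaced by a scalar multiple of the diagonal term Θ^{pn−pm+n}_{pn−pm+n}. -/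
/-!
Write `ρ = y² + z²` and `R = z ∂_y − y ∂_z`, so that `Θ^A_{A+K} = x^A ρ^K R`. Both pieces of
`X_p = (ρ + α x^{p+1}) ∂_x − α (p+1)/2 · x^p (y ∂_y + z ∂_z)` are rotation invariant, so
`[f R, X_p] = −X_p(f) R`, and
`X_p(x^A ρ^K) = A x^{A−1} ρ^{K+1} + α (A − (p+1) K) x^{A+p} ρ^K`.
Thus `[Θ, X_p]` links two neighbours `u_i = Θ^{m+i(p+1)}_{n+ip}` and `u_{i+1}` of a chain running
from `u_0 = Θ^m_n` to the diagonal term `u_{n−m}`. Choosing the coefficients of `Y` so that the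
brackets telescope, `Θ^m_n + [Y, X_p] = g_{n−m} u_{n−m}`, where each step multiplies `g` by `α`
times a rational number.
-/

noncomputable section
open MvPolynomial

lemma applyVF_eq_derivation (v : VF3) :
    applyVF v = ⇑(∑ i, v i • pderiv i : Derivation ℝ Poly3 Poly3) := by
  funext g
  simp [applyVF, Fin.sum_univ_three]

lemma applyVF_mul (w : VF3) (f g : Poly3) :
    applyVF w (f * g) = applyVF w f * g + f * applyVF w g := by
  rw [applyVF_eq_derivation, Derivation.leibniz, smul_eq_mul, smul_eq_mul]
  ring

lemma applyVF_pow (w : VF3) (f : Poly3) (n : ℕ) :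
    applyVF w (f ^ n) = n * f ^ (n - 1) * applyVF w f := by
  rw [applyVF_eq_derivation, Derivation.leibniz_pow, nsmul_eq_mul, smul_eq_mul, mul_assoc]

lemma applyVF_mul_left (f : Poly3) (v : VF3) (g : Poly3) :
    applyVF (fun j => f * v j) g = f * applyVF v g := by
  simp only [applyVF, Finset.mul_sum, mul_assoc]

lemma applyVF_sum_smul_left {ι : Type*} (s : Finset ι) (c : ι → ℝ) (v : ι → VF3) (g : Poly3) :
    applyVF (fun j => ∑ i ∈ s, c i • v i j) g = ∑ i ∈ s, c i • applyVF (v i) g := by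
  simp only [applyVF, Finset.sum_mul, smul_mul_assoc, Finset.smul_sum]
  exact Finset.sum_comm

lemma applyVF_sum_smul_right {ι : Type*} (s : Finset ι) (c : ι → ℝ) (w : VF3) (g : ι → Poly3) :
    applyVF w (∑ i ∈ s, c i • g i) = ∑ i ∈ s, c i • applyVF w (g i) := by
  simp only [applyVF_eq_derivation, map_sum, Derivation.map_smul]

lemma bracket_mul_left (f : Poly3) (v w : VF3) :
    bracket (fun j => f * v j) w = fun j => f * bracket v w j - applyVF w f * v j := by
  funext j
  simp only [bracket, applyVF_mul_left, applyVF_mul]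
  ring

lemma bracket_sum_smul_left {ι : Type*} (s : Finset ι) (c : ι → ℝ) (v : ι → VF3) (w : VF3) :
    bracket (fun j => ∑ i ∈ s, c i • v i j) w = fun j => ∑ i ∈ s, c i • bracket (v i) w j := by
  funext j
  simp only [bracket, applyVF_sum_smul_left, applyVF_sum_smul_right, smul_sub,
    Finset.sum_sub_distrib]

def rho : Poly3 := X 1 ^ 2 + X 2 ^ 2

def xRho (A K : ℕ) : Poly3 := X 0 ^ A * rho ^ K

def rotationVF : VF3 := ![0, X 2, -X 1]

/-- `Θ^A_{A+K}`, indexed by the exponents of `x` and `ρ`. -/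
def theta (A K : ℕ) : VF3 := fun j => xRho A K * rotationVF j

def xpField (a : ℝ) (P : ℕ) : VF3 :=
  ![rho + C a * X 0 ^ (P + 1),
    C (-(a * (P + 1) / 2)) * X 0 ^ P * X 1,
    C (-(a * (P + 1) / 2)) * X 0 ^ P * X 2]

lemma Tvf_eq_theta (m n : ℤ) : Tvf m n = theta m.toNat (n - m).toNat := by
  funext j
  fin_cases j <;> simp [Tvf, theta, xRho, rho, rotationVF]

lemma Fvf_combination_eq_xpField (a : ℝ) (P : ℕ) :
    (fun j => (1 / 2 : ℝ) • Fvf (-1) 0 j + a • Fvf P P j) = xpField a P := by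
  funext j
  fin_cases j <;> simp [Fvf, xpField, rho, smul_eq_C_mul]
  · rw [← mul_assoc, ← C_mul]
    norm_num
  all_goals
    rw [← mul_assoc, ← mul_assoc, ← C_mul, ← neg_mul, ← neg_mul, ← C_neg]
    ring_nf

lemma bracket_rotationVF_xpField (a : ℝ) (P : ℕ) : bracket rotationVF (xpField a P) = 0 := by
  funext j
  fin_cases j <;>
  simp [bracket, applyVF, Fin.sum_univ_three, rotationVF, xpField, rho, Derivation.leibniz,
    Derivation.leibniz_pow] <;> ring

lemma applyVF_xpField_X_pow (a : ℝ) (A P : ℕ) :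
    applyVF (xpField a P) (X 0 ^ A)
      = (A : Poly3) * X 0 ^ (A - 1) * rho + C (a * A) * X 0 ^ (A + P) := by
  rw [applyVF_pow]
  cases A with
  | zero => simp
  | succ A =>
    simp [applyVF, Fin.sum_univ_three, xpField]
    ring

lemma applyVF_xpField_rho (a : ℝ) (P : ℕ) :
    applyVF (xpField a P) rho = C (-(a * (P + 1))) * X 0 ^ P * rho := by
  have half : (C (-(a * (P + 1) / 2)) : Poly3) * 2 = C (-(a * (P + 1))) := by
    rw [← map_ofNat C 2, ← map_mul]
    ring_nf
  simp only [applyVF, xpField, rho, Fin.sum_univ_three, Matrix.cons_val_zero, Matrix.cons_val_one,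
    Matrix.cons_val, map_add, Derivation.leibniz_pow, pderiv_X, Pi.single_apply, smul_eq_mul,
    nsmul_eq_mul, Fin.reduceEq, ↓reduceIte, Nat.add_one_sub_one, pow_one, Nat.cast_ofNat, mul_one,
    mul_zero, add_zero, zero_add]
  linear_combination (X 0 ^ P * (X 1 ^ 2 + X 2 ^ 2)) * half

lemma applyVF_xpField_xRho (a : ℝ) (A K P : ℕ) :
    applyVF (xpField a P) (xRho A K)
      = (A : Poly3) * xRho (A - 1) (K + 1) + C (a * (A - (P + 1) * K)) * xRho (A + P) K := by
  rw [xRho, applyVF_mul, applyVF_xpField_X_pow, applyVF_pow, applyVF_xpField_rho]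
  cases K with
  | zero => simp [xRho]; ring
  | succ K =>
    simp only [xRho, Nat.add_one_sub_one, map_mul, map_sub, map_neg, map_natCast, map_add, map_one]
    push_cast
    ring

lemma bracket_theta_xpField (a : ℝ) (A K P : ℕ) :
    bracket (theta A K) (xpField a P) = fun j =>
      -(A : ℝ) • theta (A - 1) (K + 1) j - (a * (A - (P + 1) * K)) • theta (A + P) K j := by
  unfold theta
  rw [bracket_mul_left, bracket_rotationVF_xpField, applyVF_xpField_xRho]
  funext j
  simp only [Pi.zero_apply, mul_zero, zero_sub, smul_eq_C_mul, map_neg, map_natCast]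
  ring

/-- The ratio `g_{i+1} / (α g_i)` that makes the `i`-th bracket telescope. -/
def chainRatio (M P k i : ℕ) : ℚ :=
  ((P + 1) * (k - 1 - i : ℕ) - (M + i * (P + 1) + 1)) / (M + i * (P + 1) + 1)

def chainWeight (a : ℝ) (M P k i : ℕ) : ℝ := a ^ i * ∏ j ∈ Finset.range i, (chainRatio M P k j : ℝ)

lemma chainWeight_succ (a : ℝ) (M P k i : ℕ) :
    chainWeight a M P k (i + 1) = chainWeight a M P k i * (a * chainRatio M P k i) := by
  rw [chainWeight, chainWeight, Finset.prod_range_succ, pow_succ]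
  ring

lemma smul_bracket_theta_xpField (a : ℝ) (M P k : ℕ) {i : ℕ} (hi : i < k) (j : Fin 3) :
    (chainWeight a M P k i / (M + i * (P + 1) + 1 : ℕ)) •
        bracket (theta (M + i * (P + 1) + 1) (k - 1 - i)) (xpField a P) j
      = chainWeight a M P k (i + 1) • theta (M + (i + 1) * (P + 1)) (k - (i + 1)) j
        - chainWeight a M P k i • theta (M + i * (P + 1)) (k - i) j := by
  set A : ℕ := M + i * (P + 1) + 1 with hA
  have hA0 : (A : ℝ) ≠ 0 := by positivity
  have lower : chainWeight a M P k i / A * -A = -chainWeight a M P k i := by field_simp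
  have upper : chainWeight a M P k i / A * -(a * (A - (P + 1) * (k - 1 - i : ℕ)))
      = chainWeight a M P k (i + 1) := by
    rw [chainWeight_succ, chainRatio]
    push_cast [hA]
    field_simp
    ring
  rw [bracket_theta_xpField, smul_sub, smul_smul, smul_smul, lower,
    show A - 1 = M + i * (P + 1) by omega, show k - 1 - i + 1 = k - i by omega,
    show A + P = M + (i + 1) * (P + 1) by ring, ← upper, show k - 1 - i = k - (i + 1) by omega]
  module

theorem theta_add_bracket_xpField (a : ℝ) (M P k : ℕ) :
    (fun j => theta M k j +
      bracket (fun j => ∑ i ∈ Finset.range k,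
          (chainWeight a M P k i / (M + i * (P + 1) + 1 : ℕ)) •
            theta (M + i * (P + 1) + 1) (k - 1 - i) j)
        (xpField a P) j)
      = fun j => chainWeight a M P k k • theta (M + k * (P + 1)) 0 j := by
  rw [bracket_sum_smul_left]
  funext j
  dsimp only
  rw [Finset.sum_congr rfl fun i hi =>
      smul_bracket_theta_xpField a M P k (Finset.mem_range.1 hi) j,
    Finset.sum_range_sub (fun i => chainWeight a M P k i • theta (M + i * (P + 1)) (k - i) j)]
  simp [chainWeight]

/-- with `X_p := (1/2)F^{−1}_0 + α_p F^p_p` (`p ≥ 1`), for all integers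
`0 ≤ m < n` there are reals `c_0, …, c_{n−m−1}` and a constant `c`, with `c` equal to
`α_p^{n−m}` times a rational number, such that for
`Y := Σ_{i=0}^{n−m−1} c_i Θ^{m+ip+i+1}_{n+ip}` one has
`Θ^m_n + [Y, X_p] = c · Θ^{p(n−m)+n}_{p(n−m)+n}`. -/
theorem offdiagonal_theta_normalization (p : ℤ) (hp : 1 ≤ p) (αp : ℝ)
    (m n : ℤ) (hm : 0 ≤ m) (hmn : m < n) :
    ∃ (cs : ℕ → ℝ) (c : ℝ) (q : ℚ), c = αp ^ (n - m).toNat * (q : ℝ) ∧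
      (fun j => Tvf m n j +
        bracket
          (fun j' => ∑ i ∈ Finset.range (n - m).toNat,
            cs i • Tvf (m + (i : ℤ) * p + (i : ℤ) + 1) (n + (i : ℤ) * p) j')
          (fun j' => (1 / 2 : ℝ) • Fvf (-1) 0 j' + αp • Fvf p p j') j)
      = fun j => c • Tvf (p * (n - m) + n) (p * (n - m) + n) j := by
  obtain ⟨P, rfl⟩ := Int.eq_ofNat_of_zero_le (zero_le_one.trans hp)
  obtain ⟨M, rfl⟩ := Int.eq_ofNat_of_zero_le hm
  obtain ⟨k, rfl⟩ : ∃ k : ℕ, n = M + k := ⟨(n - M).toNat, by omega⟩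
  have hk : ((M : ℤ) + k - M).toNat = k := by omega
  have summand (i : ℕ) :
      Tvf (M + i * P + i + 1) (M + k + i * P) = theta (M + i * (P + 1) + 1) (k - 1 - i) := by
    rw [Tvf_eq_theta, Nat.mul_succ]
    congr 1 <;> omega
  have diagonal : Tvf (P * (M + k - M) + (M + k)) (P * (M + k - M) + (M + k))
      = theta (M + k * (P + 1)) 0 := by
    rw [Tvf_eq_theta, sub_self, Int.toNat_zero, add_sub_cancel_left, Nat.mul_succ, Nat.mul_comm k]
    congr 1
    omega
  refine ⟨fun i => chainWeight αp M P k i / (M + i * (P + 1) + 1 : ℕ), chainWeight αp M P k k,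
    ∏ i ∈ Finset.range k, chainRatio M P k i, by simp [chainWeight], ?_⟩
  rw [hk, Fvf_combination_eq_xpField, diagonal, Tvf_eq_theta, Int.toNat_natCast, hk]
  simp_rw [summand]
  exact theta_add_bracket_xpField αp M P k
end
end
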